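/- Let d ≥ 2, let G_d, p, and A be as in the d-dimensional construction (A contracting the second coordinate by factor 2). Then the framework G_d(A∘p) is globally rigid in ℝ^d: every configuration q : {1,...,2^{d-1}+3} → ℝ^d with |qᵢ - qⱼ| = |Apᵢ - Apⱼ| for all edges {i,j} of G_d satisfies |qᵢ - qⱼ| = |Apᵢ - Apⱼ| for all pairs i, j. -/

import Mathlib

/-- The point of ℝ^d with first coordinate `a`, second coordinate `b`, and remaining
`d-2` coordinates given by `w`. -/
noncomputable def vec (d : ℕ) (a b : ℝ) (w : Fin (d-2) → ℝ) : EuclideanSpace ℝ (Fin d) :=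
  WithLp.toLp 2 fun i => if i.1 = 0 then a else if i.1 = 1 then b else
    if h : i.1 - 2 < d - 2 then w ⟨i.1 - 2, h⟩ else 0

/-- Membership in the "hub" vertex set {1, 4, 5, ..., 2^(d-1)+3} (1-based labels). -/
def IsHub (d m : ℕ) : Prop := m = 1 ∨ (4 ≤ m ∧ m ≤ 2^(d-1)+3)

/-- The edge set of the graph G_d on {1, ..., 2^(d-1)+3}: all pairs of hub vertices;
{1,2} and {2,2k} for 2 ≤ k ≤ 2^(d-2)+1; {1,3} and {3,2k+1} for 2 ≤ k ≤ 2^(d-2)+1;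
and {2,3}. -/
def Ed (d : ℕ) : Set (ℕ × ℕ) :=
  {e | (IsHub d e.1 ∧ IsHub d e.2 ∧ e.1 ≠ e.2) ∨ e = (1,2) ∨
    (∃ k, 2 ≤ k ∧ k ≤ 2^(d-2)+1 ∧ e = (2, 2*k)) ∨ e = (1,3) ∨
    (∃ k, 2 ≤ k ∧ k ≤ 2^(d-2)+1 ∧ e = (3, 2*k+1)) ∨ e = (2,3)}

/-- The affine map A of ℝ^d contracting the second coordinate by a factor of 2. -/
noncomputable def Amap (d : ℕ) (x : EuclideanSpace ℝ (Fin d)) : EuclideanSpace ℝ (Fin d) :=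
  WithLp.toLp 2 fun i => if i.1 = 1 then x i / 2 else x i

/-!
Put vertex 1 at the origin. Vertex 1 is adjacent to every other vertex, so the edge lengths of a
configuration `q` fix the inner products `⟪q a - q 1, q b - q 1⟫` for every edge `{a, b}`. The
hubs form a clique whose translated model positions span `ℝ^d`, hence a linear isometry carries
them onto those of `q`. Pulled back by this isometry, vertex 2 has prescribed inner products with
the even hubs and vertex 3 with the odd hubs; together with their norms and their mutual inner
product this pins both of them to their model positions, so `q` is congruent to `A ∘ p`.
-/

open RealInnerProductSpace Finset

section Gram
variable {E F : Type*} [NormedAddCommGroup E] [InnerProductSpace ℝ E]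
  [NormedAddCommGroup F] [InnerProductSpace ℝ F]

lemma inner_sub_eq_of_dist_eq {x₀ x y : E} {x₀' x' y' : F} (hx : dist x x₀ = dist x' x₀')
    (hy : dist y x₀ = dist y' x₀') (hxy : dist x y = dist x' y') :
    ⟪x - x₀, y - x₀⟫ = ⟪x' - x₀', y' - x₀'⟫ := by
  simp only [real_inner_eq_norm_mul_self_add_norm_mul_self_sub_norm_sub_mul_self_div_two,
    sub_sub_sub_cancel_right, ← dist_eq_norm, hx, hy, hxy]

lemma dist_eq_of_sub_eq_map (φ : F →ₗᵢ[ℝ] E) {x₀ x y : E} {x₀' x' y' : F}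
    (hx : x - x₀ = φ (x' - x₀')) (hy : y - x₀ = φ (y' - x₀')) : dist x y = dist x' y' := by
  rw [dist_eq_norm, dist_eq_norm, ← sub_sub_sub_cancel_right x y x₀, hx, hy, ← map_sub,
    φ.norm_map, sub_sub_sub_cancel_right]

lemma inner_linearCombination_eq {ι : Type*} {u : ι → E} {v : ι → F}
    (h : ∀ i j, ⟪u i, u j⟫ = ⟪v i, v j⟫) (c c' : ι →₀ ℝ) :
    ⟪Finsupp.linearCombination ℝ u c, Finsupp.linearCombination ℝ u c'⟫ =
      ⟪Finsupp.linearCombination ℝ v c, Finsupp.linearCombination ℝ v c'⟫ := by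
  simp [Finsupp.linearCombination_apply, Finsupp.sum, sum_inner, inner_sum,
    real_inner_smul_left, real_inner_smul_right, h]

lemma exists_linearIsometry_of_inner_eq {ι : Type*} {u : ι → E} {v : ι → F}
    (hu : Submodule.span ℝ (Set.range u) = ⊤) (h : ∀ i j, ⟪u i, u j⟫ = ⟪v i, v j⟫) :
    ∃ φ : E →ₗᵢ[ℝ] F, ∀ i, φ (u i) = v i := by
  set U := Finsupp.linearCombination ℝ u
  set V := Finsupp.linearCombination ℝ v
  have hUV := inner_linearCombination_eq h
  have hU : Function.Surjective U := by
    rw [← LinearMap.range_eq_top, Finsupp.range_linearCombination, hu]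
  have hker : LinearMap.ker U ≤ LinearMap.ker V := fun c hc => by
    rw [LinearMap.mem_ker] at hc ⊢
    rw [← inner_self_eq_zero (𝕜 := ℝ), ← hUV, hc, inner_zero_left]
  set φ := (LinearMap.ker U).liftQ V hker ∘ₗ (U.quotKerEquivOfSurjective hU).symm.toLinearMap
  have hφ : ∀ c, φ (U c) = V c := fun c => by
    simp [φ, LinearMap.quotKerEquivOfSurjective_symm_apply]
  refine ⟨φ.isometryOfInner fun x y => ?_, fun i => ?_⟩
  · obtain ⟨c, rfl⟩ := hU x
    obtain ⟨c', rfl⟩ := hU y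
    rw [hφ, hφ, hUV]
  · simpa [U, V] using hφ (Finsupp.single i 1)

end Gram

def IsSignVector {n : ℕ} (v : Fin n → ℝ) : Prop := ∀ i, v i = 1 ∨ v i = -1

lemma eq_zero_of_sum_mul_eq_on_signs {n : ℕ} {u : Fin n → ℝ} {c : ℝ}
    (h : ∀ v, IsSignVector v → ∑ i, u i * v i = c) : u = 0 := by
  funext l
  set v := Function.update (1 : Fin n → ℝ) l (-1)
  have hdiff : ∑ i, u i * ((1 : Fin n → ℝ) i - v i) = 2 * u l := by
    rw [Finset.sum_eq_single l] <;> intros <;> simp_all [v]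
    ring
  have hone := h 1 fun _ => Or.inl rfl
  have hflip := h v fun i => by by_cases hi : i = l <;> simp [v, hi]
  simp only [mul_sub, Finset.sum_sub_distrib, hone, hflip, sub_self] at hdiff
  simp only [Pi.zero_apply]
  linarith

lemma exists_eq_of_injOn_signs {n : ℕ} (w : ℕ → Fin n → ℝ)
    (hw : ∀ k, 1 ≤ k → k ≤ 2 ^ n → IsSignVector (w k))
    (hwinj : ∀ k l, 1 ≤ k → k ≤ 2 ^ n → 1 ≤ l → l ≤ 2 ^ n → w k = w l → k = l)
    {v : Fin n → ℝ} (hv : IsSignVector v) : ∃ k, 1 ≤ k ∧ k ≤ 2 ^ n ∧ w k = v := by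
  have hcard : #(Fintype.piFinset fun _ : Fin n => ({1, -1} : Finset ℝ)) ≤ #(Icc 1 (2 ^ n)) := by
    simp [Fintype.card_piFinset, Finset.card_pair (show (1 : ℝ) ≠ -1 by norm_num)]
  have hv' : v ∈ Fintype.piFinset fun _ : Fin n => ({1, -1} : Finset ℝ) :=
    Fintype.mem_piFinset.2 fun i => by rcases hv i with h | h <;> simp [h]
  obtain ⟨k, hk, rfl⟩ := Finset.surjOn_of_injOn_of_card_le w
    (fun k hk => Fintype.mem_piFinset.2 fun i => by
      rw [Finset.mem_coe, Finset.mem_Icc] at hk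
      rcases hw k hk.1 hk.2 i with h | h <;> simp [h])
    (fun k hk l hl => by
      simp only [Finset.coe_Icc, Set.mem_Icc] at hk hl
      exact hwinj k l hk.1 hk.2 hl.1 hl.2) hcard hv'
  rw [Finset.mem_coe, Finset.mem_Icc] at hk
  exact ⟨k, hk.1, hk.2, rfl⟩

section Coordinates
variable {d : ℕ}

lemma vec_zero : vec d 0 0 0 = 0 := by
  ext i
  simp [vec]

lemma vec_sub (a b a' b' : ℝ) (u u' : Fin (d - 2) → ℝ) :
    vec d a b u - vec d a' b' u' = vec d (a - a') (b - b') (u - u') := by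
  ext i
  simp only [vec, PiLp.sub_apply, PiLp.toLp_apply]
  split_ifs <;> simp

lemma Amap_vec (a b : ℝ) (u : Fin (d - 2) → ℝ) : Amap d (vec d a b u) = vec d a (b / 2) u := by
  ext i
  simp only [Amap, vec, PiLp.toLp_apply]
  split_ifs <;> simp_all

lemma inner_vec (hd : 2 ≤ d) (a b a' b' : ℝ) (u u' : Fin (d - 2) → ℝ) :
    ⟪vec d a b u, vec d a' b' u'⟫ = a * a' + b * b' + ∑ l, u l * u' l := by
  obtain ⟨n, rfl⟩ := Nat.exists_eq_add_of_le' hd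
  rw [PiLp.inner_apply, Fin.sum_univ_succ, Fin.sum_univ_succ]
  simp [vec, mul_comm, add_assoc]
  rfl

lemma exists_eq_vec (hd : 2 ≤ d) (x : EuclideanSpace ℝ (Fin d)) : ∃ a b u, x = vec d a b u := by
  refine ⟨x ⟨0, by omega⟩, x ⟨1, by omega⟩, fun l => x ⟨l + 2, by omega⟩, ?_⟩
  ext i
  simp only [vec, PiLp.toLp_apply]
  split_ifs <;> first | omega | exact congrArg x.ofLp (Fin.ext (by simp; omega))

lemma exists_eq_vec_of_inner_eq_on_signs (hd : 2 ≤ d) {a b c : ℝ} {x : EuclideanSpace ℝ (Fin d)}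
    (h : ∀ v, IsSignVector v → ⟪x, vec d a b v⟫ = c) :
    ∃ s t, x = vec d s t 0 ∧ s * a + t * b = c := by
  obtain ⟨s, t, u, rfl⟩ := exists_eq_vec hd x
  simp only [inner_vec hd] at h
  obtain rfl : u = 0 :=
    eq_zero_of_sum_mul_eq_on_signs (c := c - s * a - t * b) fun v hv => by linarith [h v hv]
  exact ⟨s, t, rfl, by simpa using h 1 fun _ => Or.inl rfl⟩

lemma span_vec_signs_eq_top (hd : 2 ≤ d) :
    Submodule.span ℝ {x | ∃ v, IsSignVector v ∧ (x = vec d (-1) (-1) v ∨ x = vec d 1 (-1) v)} =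
      ⊤ := by
  rw [← Submodule.orthogonal_eq_bot_iff, Submodule.eq_bot_iff]
  intro x hx
  have h := (Submodule.mem_orthogonal' _ x).1 hx
  obtain ⟨s, t, rfl, hst⟩ := exists_eq_vec_of_inner_eq_on_signs hd (c := 0) fun v hv =>
    h _ (Submodule.subset_span ⟨v, hv, Or.inl rfl⟩)
  have hodd := h _ (Submodule.subset_span ⟨1, fun _ => Or.inl rfl, Or.inr rfl⟩)
  simp only [inner_vec hd, Pi.zero_apply, zero_mul, Finset.sum_const_zero, add_zero] at hodd
  rw [show s = 0 by linarith, show t = 0 by linarith, vec_zero]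

/-- Each of the two vertices alone has two candidate positions, related by a reflection fixing
the hubs it sees; their mutual inner product excludes the mixed choices and the reflected pair. -/
lemma vertices_two_three_eq (hd : 2 ≤ d) {y z : EuclideanSpace ℝ (Fin d)}
    (hy : ∀ v, IsSignVector v → ⟪y, vec d (-1) (-1) v⟫ = 1)
    (hz : ∀ v, IsSignVector v → ⟪z, vec d 1 (-1) v⟫ = 8 / 5)
    (hyy : ⟪y, y⟫ = 5 / 8) (hzz : ⟪z, z⟫ = 281 / 200) (hyz : ⟪y, z⟫ = 3 / 20) :
    y = vec d (-1 / 4) (-3 / 4) 0 ∧ z = vec d (21 / 20) (-11 / 20) 0 := by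
  obtain ⟨a, b, rfl, hab⟩ := exists_eq_vec_of_inner_eq_on_signs hd hy
  obtain ⟨c, e, rfl, hce⟩ := exists_eq_vec_of_inner_eq_on_signs hd hz
  simp only [inner_vec hd, Pi.zero_apply, zero_mul, Finset.sum_const_zero, add_zero] at hyy hzz hyz
  have hs : (a - b) ^ 2 = 1 / 4 := by linear_combination 2 * hyy + (a + b - 1) * hab
  have ht : (c + e) ^ 2 = 1 / 4 := by linear_combination 2 * hzz - (c - e + 8 / 5) * hce
  have hst : c + e = 8 / 5 * (a - b) - 3 / 10 := by
    linear_combination -2 * hyz - (c + e) * hab + (a - b) * hce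
  have hs' : a - b = 1 / 2 := by
    linear_combination (25 / 24) * ((64 / 25) * hs - ht + (c + e + 8 / 5 * (a - b) - 3 / 10) * hst)
  constructor <;> congr 1 <;> linarith

end Coordinates

section Framework
variable {d : ℕ} {P X : ℕ → EuclideanSpace ℝ (Fin d)}

lemma IsHub.bounds {m : ℕ} (h : IsHub d m) : 1 ≤ m ∧ m ≤ 2 ^ (d - 1) + 3 := by
  rcases h with rfl | h
  · exact ⟨le_rfl, by simp⟩
  · omega

lemma one_mem_Ed {m : ℕ} (h2 : 2 ≤ m) (hm : m ≤ 2 ^ (d - 1) + 3) : (1, m) ∈ Ed d := by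
  rcases (by omega : m = 2 ∨ m = 3 ∨ 4 ≤ m) with rfl | rfl | h4
  · exact Or.inr (Or.inl rfl)
  · exact Or.inr (Or.inr (Or.inr (Or.inl rfl)))
  · exact Or.inl ⟨Or.inl rfl, Or.inr ⟨h4, hm⟩, by omega⟩

lemma two_even_mem_Ed {j : ℕ} (h1 : 2 ≤ j) (h2 : j ≤ 2 ^ (d - 2) + 1) : (2, 2 * j) ∈ Ed d :=
  Or.inr (Or.inr (Or.inl ⟨j, h1, h2, rfl⟩))

lemma three_odd_mem_Ed {j : ℕ} (h1 : 2 ≤ j) (h2 : j ≤ 2 ^ (d - 2) + 1) : (3, 2 * j + 1) ∈ Ed d :=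
  Or.inr (Or.inr (Or.inr (Or.inr (Or.inl ⟨j, h1, h2, rfl⟩))))

lemma two_three_mem_Ed : (2, 3) ∈ Ed d :=
  Or.inr (Or.inr (Or.inr (Or.inr (Or.inr rfl))))

lemma two_pow_pred_eq (hd : 2 ≤ d) : 2 ^ (d - 1) = 2 * 2 ^ (d - 2) := by
  rw [← pow_succ']
  congr 1
  omega

lemma exists_linearIsometryEquiv_on_hubs (hd : 2 ≤ d)
    (hsign : ∀ v, IsSignVector v → ∃ j, 2 ≤ j ∧ j ≤ 2 ^ (d - 2) + 1 ∧
      P (2 * j) = vec d (-1) (-1) v ∧ P (2 * j + 1) = vec d 1 (-1) v)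
    (hgram : ∀ a b, IsHub d a → IsHub d b → ⟪P a, P b⟫ = ⟪X a, X b⟫) :
    ∃ φ : EuclideanSpace ℝ (Fin d) ≃ₗᵢ[ℝ] EuclideanSpace ℝ (Fin d),
      ∀ m, IsHub d m → φ (P m) = X m := by
  have hN := two_pow_pred_eq hd
  have hspan : Submodule.span ℝ (Set.range fun a : {m // IsHub d m} => P a) = ⊤ := by
    refine top_unique ((span_vec_signs_eq_top hd).symm.le.trans (Submodule.span_mono ?_))
    rintro x ⟨v, hv, rfl | rfl⟩ <;> obtain ⟨j, hj1, hj2, he, ho⟩ := hsign v hv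
    exacts [⟨⟨2 * j, Or.inr ⟨by omega, by omega⟩⟩, he⟩,
      ⟨⟨2 * j + 1, Or.inr ⟨by omega, by omega⟩⟩, ho⟩]
  obtain ⟨φ, hφ⟩ := exists_linearIsometry_of_inner_eq hspan fun a b => hgram a b a.2 b.2
  exact ⟨φ.toLinearIsometryEquiv rfl, fun m hm => hφ ⟨m, hm⟩⟩

lemma eq_map_two_three (hd : 2 ≤ d)
    (hsign : ∀ v, IsSignVector v → ∃ j, 2 ≤ j ∧ j ≤ 2 ^ (d - 2) + 1 ∧
      P (2 * j) = vec d (-1) (-1) v ∧ P (2 * j + 1) = vec d 1 (-1) v)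
    (hP2 : P 2 = vec d (-1 / 4) (-3 / 4) 0) (hP3 : P 3 = vec d (21 / 20) (-11 / 20) 0)
    (hgram : ∀ a b, 1 ≤ a → a ≤ 2 ^ (d - 1) + 3 → 1 ≤ b → b ≤ 2 ^ (d - 1) + 3 →
      (a = b ∨ (a, b) ∈ Ed d) → ⟪X a, X b⟫ = ⟪P a, P b⟫)
    (φ : EuclideanSpace ℝ (Fin d) ≃ₗᵢ[ℝ] EuclideanSpace ℝ (Fin d))
    (hφ : ∀ m, IsHub d m → φ (P m) = X m) :
    X 2 = φ (P 2) ∧ X 3 = φ (P 3) := by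
  have hN := two_pow_pred_eq hd
  have hpull : ∀ a b, 2 ≤ a → a ≤ 3 → 2 ≤ b → b ≤ 2 ^ (d - 1) + 3 → (a = b ∨ (a, b) ∈ Ed d) →
      ⟪φ.symm (X a), φ.symm (X b)⟫ = ⟪P a, P b⟫ := fun a b ha1 ha2 hb1 hb2 hab => by
    rw [φ.symm.inner_map_map, hgram a b (by omega) (by omega) (by omega) hb2 hab]
  have hhub : ∀ m, IsHub d m → φ.symm (X m) = P m := fun m hm => by
    rw [← hφ m hm, φ.symm_apply_apply]
  have hy : ∀ v, IsSignVector v → ⟪φ.symm (X 2), vec d (-1) (-1) v⟫ = 1 := fun v hv => by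
    obtain ⟨j, hj1, hj2, he, -⟩ := hsign v hv
    rw [← he, ← hhub (2 * j) (Or.inr ⟨by omega, by omega⟩),
      hpull 2 (2 * j) le_rfl (by norm_num) (by omega) (by omega) (Or.inr (two_even_mem_Ed hj1 hj2)),
      hP2, he, inner_vec hd]
    norm_num
  have hz : ∀ v, IsSignVector v → ⟪φ.symm (X 3), vec d 1 (-1) v⟫ = 8 / 5 := fun v hv => by
    obtain ⟨j, hj1, hj2, -, ho⟩ := hsign v hv
    rw [← ho, ← hhub (2 * j + 1) (Or.inr ⟨by omega, by omega⟩),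
      hpull 3 (2 * j + 1) (by norm_num) le_rfl (by omega) (by omega)
        (Or.inr (three_odd_mem_Ed hj1 hj2)),
      hP3, ho, inner_vec hd]
    norm_num
  obtain ⟨h2, h3⟩ := vertices_two_three_eq hd hy hz
    (by rw [hpull 2 2 le_rfl (by norm_num) le_rfl (by omega) (Or.inl rfl), hP2, inner_vec hd]
        norm_num)
    (by rw [hpull 3 3 (by norm_num) le_rfl (by norm_num) (by omega) (Or.inl rfl), hP3, inner_vec hd]
        norm_num)
    (by rw [hpull 2 3 le_rfl (by norm_num) (by norm_num) (by omega) (Or.inr two_three_mem_Ed), hP2,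
          hP3, inner_vec hd]
        norm_num)
  rw [hP2, hP3, ← h2, ← h3, φ.apply_symm_apply, φ.apply_symm_apply]
  exact ⟨rfl, rfl⟩

theorem exists_linearIsometryEquiv_of_inner_eq_on_Ed (hd : 2 ≤ d) (w : ℕ → Fin (d - 2) → ℝ)
    (hw : ∀ k, 1 ≤ k → k ≤ 2 ^ (d - 2) → IsSignVector (w k))
    (hwinj : ∀ k l, 1 ≤ k → k ≤ 2 ^ (d - 2) → 1 ≤ l → l ≤ 2 ^ (d - 2) → w k = w l → k = l)
    (hP2 : P 2 = vec d (-1 / 4) (-3 / 4) 0) (hP3 : P 3 = vec d (21 / 20) (-11 / 20) 0)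
    (hPe : ∀ j, 2 ≤ j → j ≤ 2 ^ (d - 2) + 1 → P (2 * j) = vec d (-1) (-1) (w (j - 1)))
    (hPo : ∀ j, 2 ≤ j → j ≤ 2 ^ (d - 2) + 1 → P (2 * j + 1) = vec d 1 (-1) (w (j - 1)))
    (hgram : ∀ a b, 1 ≤ a → a ≤ 2 ^ (d - 1) + 3 → 1 ≤ b → b ≤ 2 ^ (d - 1) + 3 →
      (a = b ∨ (a, b) ∈ Ed d) → ⟪X a, X b⟫ = ⟪P a, P b⟫) :
    ∃ φ : EuclideanSpace ℝ (Fin d) ≃ₗᵢ[ℝ] EuclideanSpace ℝ (Fin d),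
      ∀ m, 1 ≤ m → m ≤ 2 ^ (d - 1) + 3 → X m = φ (P m) := by
  have hsign : ∀ v, IsSignVector v → ∃ j, 2 ≤ j ∧ j ≤ 2 ^ (d - 2) + 1 ∧
      P (2 * j) = vec d (-1) (-1) v ∧ P (2 * j + 1) = vec d 1 (-1) v := fun v hv => by
    obtain ⟨k, hk1, hk2, rfl⟩ := exists_eq_of_injOn_signs w hw hwinj hv
    exact ⟨k + 1, by omega, by omega, hPe (k + 1) (by omega) (by omega),
      hPo (k + 1) (by omega) (by omega)⟩
  obtain ⟨φ, hφ⟩ := exists_linearIsometryEquiv_on_hubs hd hsign fun a b ha hb => by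
    refine (hgram a b ha.bounds.1 ha.bounds.2 hb.bounds.1 hb.bounds.2 ?_).symm
    by_cases hab : a = b
    exacts [Or.inl hab, Or.inr (Or.inl ⟨ha, hb, hab⟩)]
  obtain ⟨h2, h3⟩ := eq_map_two_three hd hsign hP2 hP3 hgram φ hφ
  refine ⟨φ, fun m hm1 hm2 => ?_⟩
  rcases (by unfold IsHub; omega : m = 2 ∨ m = 3 ∨ IsHub d m) with rfl | rfl | hm
  exacts [h2, h3, (hφ m hm).symm]

end Framework

/-- The framework G_d(A∘p) is globally rigid in ℝ^d: every configuration with the same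
edge lengths has the same distances between all pairs of vertices of G_d. -/
theorem stmt_18 (d : ℕ) (hd : 2 ≤ d)
    (w : ℕ → Fin (d-2) → ℝ)
    (hw : ∀ k, 1 ≤ k → k ≤ 2^(d-2) → ∀ i, w k i = 1 ∨ w k i = -1)
    (hwinj : ∀ k l, 1 ≤ k → k ≤ 2^(d-2) → 1 ≤ l → l ≤ 2^(d-2) → w k = w l → k = l)
    (p : ℕ → EuclideanSpace ℝ (Fin d))
    (hp1 : p 1 = vec d 0 2 (fun _ => 0))
    (hp2 : p 2 = vec d (-1/4) (1/2) (fun _ => 0))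
    (hp3 : p 3 = vec d (21/20) (9/10) (fun _ => 0))
    (hpev : ∀ j, 2 ≤ j → j ≤ 2^(d-2)+1 → p (2*j) = vec d (-1) 0 (w (j-1)))
    (hpod : ∀ j, 2 ≤ j → j ≤ 2^(d-2)+1 → p (2*j+1) = vec d 1 0 (w (j-1))) :
    ∀ q : ℕ → EuclideanSpace ℝ (Fin d),
      (∀ e ∈ Ed d, dist (q e.1) (q e.2) = dist (Amap d (p e.1)) (Amap d (p e.2))) →
      ∀ i j, 1 ≤ i → i ≤ 2^(d-1)+3 → 1 ≤ j → j ≤ 2^(d-1)+3 →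
        dist (q i) (q j) = dist (Amap d (p i)) (Amap d (p j)) := by
  intro q hq i j hi1 hi2 hj1 hj2
  simp only [← Pi.zero_def] at hp1 hp2 hp3
  have hP : ∀ m a b u, p m = vec d a b u → Amap d (p m) - Amap d (p 1) = vec d a (b / 2 - 1) u := by
    intro m a b u hm
    rw [hm, hp1, Amap_vec, Amap_vec, vec_sub, sub_zero]
    norm_num
  have hdist1 : ∀ m, 1 ≤ m → m ≤ 2 ^ (d - 1) + 3 →
      dist (q m) (q 1) = dist (Amap d (p m)) (Amap d (p 1)) := by
    intro m h1 h2
    rcases h1.eq_or_lt with rfl | h1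
    · simp
    · rw [dist_comm, hq _ (one_mem_Ed h1 h2), dist_comm]
  obtain ⟨φ, hφ⟩ := exists_linearIsometryEquiv_of_inner_eq_on_Ed hd w hw hwinj
    (P := fun m => Amap d (p m) - Amap d (p 1)) (X := fun m => q m - q 1)
    (by rw [hP 2 _ _ _ hp2]; norm_num) (by rw [hP 3 _ _ _ hp3]; norm_num)
    (fun j h1 h2 => by rw [hP _ _ _ _ (hpev j h1 h2)]; norm_num)
    (fun j h1 h2 => by rw [hP _ _ _ _ (hpod j h1 h2)]; norm_num)
    (fun a b ha1 ha2 hb1 hb2 hab => by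
      refine inner_sub_eq_of_dist_eq (hdist1 a ha1 ha2) (hdist1 b hb1 hb2) ?_
      rcases hab with rfl | hab
      · rw [dist_self, dist_self]
      · exact hq (a, b) hab)
  exact dist_eq_of_sub_eq_map φ.toLinearIsometry (hφ i hi1 hi2) (hφ j hj1 hj2)
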